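/- arXiv:1401.5947 — 7 statements merged into one kernel-verified Lean document; each statement's English description precedes it below -/
import Mathlib

section
/- The generalized Beilinson algebra B(n,r) is isomorphic to its opposite algebra B(n,r)^op. -/
open FreeAlgebra

/-- Generators of the generalized Beilinson algebra `B(n,r)`: the paths of length
zero `e_i` (`vert i`, `i = 0,…,n-1`) and the arrows `γ_s^{(i)} : i → i+1`
(`arr s i`, `s = 1,…,r`, `i = 0,…,n-2`). -/
inductive BGen (n r : ℕ) : Type
  | vert : Fin n → BGen n r
  | arr : Fin r → Fin (n - 1) → BGen n r

variable (k : Type) [Field k] (n r : ℕ)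

def srcV (i : Fin (n - 1)) : Fin n := ⟨i.val, by have := i.isLt; omega⟩
def tgtV (i : Fin (n - 1)) : Fin n := ⟨i.val + 1, by have := i.isLt; omega⟩

/-- The defining relations of `B(n,r)` as a quotient of the free algebra: the `e_i`
are orthogonal idempotents summing to `1`, the arrow `γ_s^{(i)}` runs from vertex `i`
to vertex `i+1`, and consecutive arrows satisfy the commutativity relations
`γ_s^{(i+1)} γ_t^{(i)} = γ_t^{(i+1)} γ_s^{(i)}`. -/
inductive BRel : FreeAlgebra k (BGen n r) → FreeAlgebra k (BGen n r) → Prop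
  | idem (i : Fin n) :
      BRel (ι k (BGen.vert i) * ι k (BGen.vert i)) (ι k (BGen.vert i))
  | orth (i j : Fin n) (h : i ≠ j) :
      BRel (ι k (BGen.vert i) * ι k (BGen.vert j)) 0
  | sum_one : BRel (∑ i : Fin n, ι k (BGen.vert i)) 1
  | tgt_arr (s : Fin r) (i : Fin (n - 1)) :
      BRel (ι k (BGen.vert (tgtV n i)) * ι k (BGen.arr s i)) (ι k (BGen.arr s i))
  | arr_src (s : Fin r) (i : Fin (n - 1)) :
      BRel (ι k (BGen.arr s i) * ι k (BGen.vert (srcV n i))) (ι k (BGen.arr s i))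
  | comm_rel (s t : Fin r) (i j : Fin (n - 1)) (h : (j : ℕ) = (i : ℕ) + 1) :
      BRel (ι k (BGen.arr s j) * ι k (BGen.arr t i))
           (ι k (BGen.arr t j) * ι k (BGen.arr s i))

/-- The generalized Beilinson algebra `B(n,r)`: the path algebra of the Beilinson
quiver modulo the commutativity relations, presented by generators and relations. -/
abbrev Beilinson : Type := RingQuot (BRel k n r)

/-- The flip of generators implementing the anti-automorphism. -/
def bflip {n r : ℕ} : BGen n r → BGen n r
  | .vert i => .vert i.rev
  | .arr s i => .arr s i.rev

lemma bflip_bflip {n r : ℕ} (x : BGen n r) : bflip (bflip x) = x := by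
  cases x <;> simp [bflip]

def bmap (x : BGen n r) : (Beilinson k n r)ᵐᵒᵖ :=
  MulOpposite.op (RingQuot.mkAlgHom k (BRel k n r) (ι k (bflip x)))

lemma srcV_rev (i : Fin (n-1)) : (srcV n i).rev = tgtV n i.rev := by
  have := i.isLt; apply Fin.ext; simp [srcV, tgtV, Fin.rev]; omega

lemma tgtV_rev (i : Fin (n-1)) : (tgtV n i).rev = srcV n i.rev := by
  have := i.isLt; apply Fin.ext; simp [srcV, tgtV, Fin.rev]; omega

lemma bmap_rel : ∀ ⦃a b⦄, BRel k n r a b →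
    FreeAlgebra.lift k (bmap k n r) a = FreeAlgebra.lift k (bmap k n r) b := by
  intro a b h
  induction h with
  | idem i =>
      simp only [map_mul, lift_ι_apply, bmap, bflip]
      rw [← MulOpposite.op_mul, ← map_mul]
      exact congrArg _ (RingQuot.mkAlgHom_rel k (BRel.idem (k := k) (r := r) i.rev))
  | orth i j h =>
      simp only [map_mul, lift_ι_apply, bmap, bflip]
      rw [← MulOpposite.op_mul, ← map_mul,
        RingQuot.mkAlgHom_rel k
          (BRel.orth (k := k) (r := r) j.rev i.rev
            (fun hh => h (Fin.rev_injective hh).symm))]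
      simp
  | sum_one =>
      simp only [map_sum, map_one, lift_ι_apply, bmap, bflip]
      rw [← MulOpposite.op_one, ← Finset.op_sum, ← map_sum]
      congr 1
      have hsum : (∑ x : Fin n, ι k (BGen.vert (n := n) (r := r) x.rev)) =
          ∑ x : Fin n, ι k (BGen.vert x) :=
        Fintype.sum_equiv Fin.revPerm _ _ (fun x => rfl)
      rw [hsum, RingQuot.mkAlgHom_rel k (BRel.sum_one (k := k) (n := n) (r := r)), map_one]
  | tgt_arr s i =>
      simp only [map_mul, lift_ι_apply, bmap, bflip]
      rw [tgtV_rev, ← MulOpposite.op_mul, ← map_mul]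
      exact congrArg _ (RingQuot.mkAlgHom_rel k (BRel.arr_src (k := k) s i.rev))
  | arr_src s i =>
      simp only [map_mul, lift_ι_apply, bmap, bflip]
      rw [srcV_rev, ← MulOpposite.op_mul, ← map_mul]
      exact congrArg _ (RingQuot.mkAlgHom_rel k (BRel.tgt_arr (k := k) s i.rev))
  | comm_rel s t i j h =>
      simp only [map_mul, lift_ι_apply, bmap, bflip]
      rw [← MulOpposite.op_mul, ← MulOpposite.op_mul, ← map_mul, ← map_mul]
      have hij : (i.rev : ℕ) = (j.rev : ℕ) + 1 := by
        have := i.isLt; have := j.isLt; simp [Fin.rev]; omega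
      rw [RingQuot.mkAlgHom_rel k (BRel.comm_rel (k := k) t s j.rev i.rev hij),
        RingQuot.mkAlgHom_rel k (BRel.comm_rel (k := k) s t j.rev i.rev hij)]

noncomputable def bAntiHom : Beilinson k n r →ₐ[k] (Beilinson k n r)ᵐᵒᵖ :=
  RingQuot.liftAlgHom k ⟨FreeAlgebra.lift k (bmap k n r), bmap_rel k n r⟩

lemma bAntiHom_gen (x : BGen n r) :
    bAntiHom k n r (RingQuot.mkAlgHom k (BRel k n r) (ι k x)) =
      MulOpposite.op (RingQuot.mkAlgHom k (BRel k n r) (ι k (bflip x))) := by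
  rw [bAntiHom, RingQuot.liftAlgHom_mkAlgHom_apply, lift_ι_apply, bmap]

noncomputable def bInv : (Beilinson k n r)ᵐᵒᵖ →ₐ[k] Beilinson k n r :=
  AlgHom.opComm (bAntiHom k n r)

lemma bInv_op (x : Beilinson k n r) :
    bInv k n r (MulOpposite.op x) = MulOpposite.unop (bAntiHom k n r x) := rfl

lemma gf : (bInv k n r).comp (bAntiHom k n r) = AlgHom.id k _ := by
  apply RingQuot.ringQuot_ext'
  apply FreeAlgebra.hom_ext
  funext x
  simp only [Function.comp_apply, AlgHom.coe_comp, AlgHom.coe_id, id_eq]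
  show bInv k n r (bAntiHom k n r (RingQuot.mkAlgHom k (BRel k n r) (ι k x))) = _
  rw [bAntiHom_gen, bInv_op, bAntiHom_gen, bflip_bflip]
  rfl

/-- The generalized Beilinson algebra is isomorphic to its
opposite algebra: `B(n,r) ≅ B(n,r)^{op}`. -/
theorem beilinson_iso_opposite {k : Type} [Field k] [IsAlgClosed k] {n r : ℕ}
    (hn : 2 ≤ n) (hr : 2 ≤ r) :
    Nonempty (Beilinson k n r ≃ₐ[k] (Beilinson k n r)ᵐᵒᵖ) := by
  refine ⟨AlgEquiv.ofAlgHom (bAntiHom k n r) (bInv k n r) ?_ (gf k n r)⟩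
  ext y
  simp only [AlgHom.coe_comp, Function.comp_apply, AlgHom.coe_id, id_eq]
  have h1 : ∀ x : Beilinson k n r, bInv k n r (bAntiHom k n r x) = x :=
    fun x => congrFun (congrArg DFunLike.coe (gf k n r)) x
  rw [← MulOpposite.op_unop y, bInv_op]
  set u := MulOpposite.unop (bAntiHom k n r y.unop) with hu
  have h2 : bAntiHom k n r u = MulOpposite.op (bInv k n r (MulOpposite.op u)) := by
    rw [bInv_op, MulOpposite.op_unop]
  rw [h2, hu, MulOpposite.op_unop, h1]
end

section
/- The category of finite-dimensional B(n,r)-modules is equivalent to the category of finitely generated Z-graded modules over the polynomial ring R = k[X₁,…,X_r] whose support (set of degrees with nonzero component) is contained in {0, 1, …, n−1}. -/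
open Function Module

/-- A finite-dimensional representation of the generalized Beilinson quiver with
`n` vertices (indexed by `0, …, n-1`, all components for indices `≥ n` trivial)
and `r` commuting arrows between consecutive vertices; this is the same datum as a
finite-dimensional module over the generalized Beilinson algebra `B(n,r)`. -/
structure BRep (k : Type) [Field k] (n r : ℕ) where
  V : ℕ → Type
  [acg : ∀ i, AddCommGroup (V i)]
  [mod : ∀ i, Module k (V i)]
  [fd : ∀ i, FiniteDimensional k (V i)]
  f : Fin r → (i : ℕ) → V i →ₗ[k] V (i + 1)
  comm : ∀ s t i, (f s (i + 1)).comp (f t i) = (f t (i + 1)).comp (f s i)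
  bound : ∀ i, n ≤ i → Subsingleton (V i)

attribute [instance] BRep.acg BRep.mod BRep.fd

variable {k : Type} [Field k] {n r : ℕ}

/-- The operator `α_M` (in degree `i`): left multiplication by `Σ_j α_j γ_j^{(i)}`. -/
noncomputable def BRep.lop (X : BRep k n r) (α : Fin r → k) (i : ℕ) :
    X.V i →ₗ[k] X.V (i + 1) :=
  ∑ j, α j • X.f j i

/-- Equal images property: `im (α_M) = ⊕_{i=1}^{n-1} e_i · M` for all `α ≠ 0`. -/
def BRep.EIP (X : BRep k n r) : Prop :=
  ∀ α : Fin r → k, α ≠ 0 → ∀ i, Surjective (X.lop α i)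

/-- Equal kernels property: `ker (α_M) = e_{n-1} · M` for all `α ≠ 0`. -/
def BRep.EKP (X : BRep k n r) : Prop :=
  ∀ α : Fin r → k, α ≠ 0 → ∀ i, i + 1 < n → Injective (X.lop α i)

/-- Morphisms of representations, i.e. `B(n,r)`-module homomorphisms. -/
structure BRepHom (X Y : BRep k n r) where
  app : (i : ℕ) → X.V i →ₗ[k] Y.V i
  natural : ∀ j i, (Y.f j i).comp (app i) = (app (i + 1)).comp (X.f j i)

def BRepHom.id (X : BRep k n r) : BRepHom X X :=
  ⟨fun _ => LinearMap.id, fun _ _ => by ext x; simp⟩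

def BRepHom.comp {X Y Z : BRep k n r} (g : BRepHom Y Z) (h : BRepHom X Y) :
    BRepHom X Z :=
  ⟨fun i => (g.app i).comp (h.app i), fun j i => by
    ext x
    have h1 := LinearMap.congr_fun (g.natural j i) (h.app i x)
    have h2 := LinearMap.congr_fun (h.natural j i) x
    simp only [LinearMap.comp_apply] at *
    rw [h1, h2]⟩

/-- Isomorphism of representations. -/
def BRepIso (X Y : BRep k n r) : Prop :=
  ∃ g : BRepHom X Y, ∀ i, Bijective (g.app i)

/-- Direct sum of two representations. -/
noncomputable def BRep.prod (X Y : BRep k n r) : BRep k n r where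
  V i := X.V i × Y.V i
  f j i := (X.f j i).prodMap (Y.f j i)
  comm s t i := by
    apply LinearMap.ext
    rintro ⟨a, b⟩
    have h1 := LinearMap.congr_fun (X.comm s t i) a
    have h2 := LinearMap.congr_fun (Y.comm s t i) b
    simp only [LinearMap.comp_apply] at h1 h2
    simp only [LinearMap.comp_apply, LinearMap.prodMap_apply]
    exact Prod.ext h1 h2
  bound i h := by
    haveI := X.bound i h
    haveI := Y.bound i h
    infer_instance

/-- The zero representation (all components trivial). -/
def BRep.IsZero (X : BRep k n r) : Prop := ∀ i, Subsingleton (X.V i)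

/-- Indecomposability. -/
def BIndec (X : BRep k n r) : Prop :=
  ¬X.IsZero ∧ ∀ Y Z : BRep k n r, BRepIso X (Y.prod Z) → Y.IsZero ∨ Z.IsZero

/-- Injectivity as an object of the module category. -/
def BInjObj (S : BRep k n r) : Prop :=
  ∀ (X Y : BRep k n r) (g : BRepHom X Y), (∀ i, Injective (g.app i)) →
    ∀ h : BRepHom X S, ∃ h' : BRepHom Y S, ∀ i x, h'.app i (g.app i x) = h.app i x

/-- A finitely generated `ℤ`-graded module over `R = k[X₁,…,X_r]` whose support is
contained in `{0,…,n-1}`: finite-dimensional graded components `C d`, the action of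
the variables `X_j` raising degrees by one and commuting, and trivial components
outside `{0,…,n-1}`. -/
structure GrMod (k : Type) [Field k] (r n : ℕ) where
  C : ℤ → Type
  [acg : ∀ d, AddCommGroup (C d)]
  [mod : ∀ d, Module k (C d)]
  [fd : ∀ d, FiniteDimensional k (C d)]
  act : Fin r → (d : ℤ) → C d →ₗ[k] C (d + 1)
  comm : ∀ s t d, (act s (d + 1)).comp (act t d) = (act t (d + 1)).comp (act s d)
  supp : ∀ d : ℤ, (d < 0 ∨ (n : ℤ) ≤ d) → Subsingleton (C d)

attribute [instance] GrMod.acg GrMod.mod GrMod.fd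

/-- Degree-preserving homomorphisms of graded `R`-modules. -/
structure GrHom {k : Type} [Field k] {r n : ℕ} (X Y : GrMod k r n) where
  app : (d : ℤ) → X.C d →ₗ[k] Y.C d
  natural : ∀ j d, (Y.act j d).comp (app d) = (app (d + 1)).comp (X.act j d)

def GrHom.id {k : Type} [Field k] {r n : ℕ} (X : GrMod k r n) : GrHom X X :=
  ⟨fun _ => LinearMap.id, fun _ _ => by ext x; simp⟩

def GrHom.comp {k : Type} [Field k] {r n : ℕ} {X Y Z : GrMod k r n}
    (g : GrHom Y Z) (h : GrHom X Y) : GrHom X Z :=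
  ⟨fun d => (g.app d).comp (h.app d), fun j d => by
    ext x
    have h1 := LinearMap.congr_fun (g.natural j d) (h.app d x)
    have h2 := LinearMap.congr_fun (h.natural j d) x
    simp only [LinearMap.comp_apply] at *
    rw [h1, h2]⟩

def GrIso {k : Type} [Field k] {r n : ℕ} (X Y : GrMod k r n) : Prop :=
  ∃ g : GrHom X Y, ∀ d, Bijective (g.app d)

section Aux

/-- Extension of the components of a `BRep` to all integer degrees. -/
def BRep.extC (X : BRep k n r) : ℤ → Type
  | .ofNat m => X.V m
  | .negSucc _ => PUnit

noncomputable instance (X : BRep k n r) (d : ℤ) : AddCommGroup (X.extC d) :=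
  match d with
  | .ofNat m => inferInstanceAs (AddCommGroup (X.V m))
  | .negSucc _ => inferInstanceAs (AddCommGroup PUnit)

noncomputable instance (X : BRep k n r) (d : ℤ) : Module k (X.extC d) :=
  match d with
  | .ofNat m => inferInstanceAs (Module k (X.V m))
  | .negSucc _ => inferInstanceAs (Module k PUnit)

noncomputable instance (X : BRep k n r) (d : ℤ) : FiniteDimensional k (X.extC d) :=
  match d with
  | .ofNat m => inferInstanceAs (FiniteDimensional k (X.V m))
  | .negSucc _ => inferInstanceAs (FiniteDimensional k PUnit)

instance (X : BRep k n r) (m : ℕ) : Subsingleton (X.extC (.negSucc m)) :=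
  inferInstanceAs (Subsingleton PUnit)

/-- Extension of the arrow action to all integer degrees. -/
noncomputable def BRep.extAct (X : BRep k n r) (j : Fin r) :
    (d : ℤ) → X.extC d →ₗ[k] X.extC (d + 1)
  | .ofNat m => X.f j m
  | .negSucc _ => 0

/-- The functor on objects. -/
noncomputable def BRep.toGr (X : BRep k n r) : GrMod k r n where
  C := X.extC
  act := X.extAct
  comm s t d := by
    match d with
    | .ofNat m => exact X.comm s t m
    | .negSucc m =>
      apply LinearMap.ext
      intro x
      have hx : x = 0 := Subsingleton.elim x 0
      simp [hx]
  supp d hd := by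
    match d with
    | .ofNat m =>
      rcases hd with hd | hd
      · exact absurd hd (Int.not_lt.mpr (Int.ofNat_nonneg m))
      · exact X.bound m (Int.ofNat_le.mp hd)
    | .negSucc m => infer_instance

instance (X : BRep k n r) (m : ℕ) : Subsingleton (X.toGr.C (Int.negSucc m)) :=
  inferInstanceAs (Subsingleton PUnit)

/-- The functor on morphisms (components). -/
noncomputable def BRepHom.extApp {X Y : BRep k n r} (g : BRepHom X Y) :
    (d : ℤ) → X.extC d →ₗ[k] Y.extC d
  | .ofNat m => g.app m
  | .negSucc _ => 0

/-- The functor on morphisms. -/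
noncomputable def BRepHom.toGr {X Y : BRep k n r} (g : BRepHom X Y) :
    GrHom X.toGr Y.toGr where
  app := g.extApp
  natural j d := by
    match d with
    | .ofNat m => exact g.natural j m
    | .negSucc m =>
      apply LinearMap.ext
      intro x
      have hx : x = 0 := Subsingleton.elim x 0
      simp [hx]

theorem BRepHom.ext' {X Y : BRep k n r} {g g' : BRepHom X Y}
    (h : ∀ i, g.app i = g'.app i) : g = g' := by
  cases g; cases g'
  simp only [BRepHom.mk.injEq]
  funext i
  exact h i

theorem GrHom.ext' {X Y : GrMod k r n} {g g' : GrHom X Y}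
    (h : ∀ d, g.app d = g'.app d) : g = g' := by
  cases g; cases g'
  simp only [GrHom.mk.injEq]
  funext d
  exact h d

end Aux

/-- The category of finite-dimensional `B(n,r)`-modules is equivalent
to the category of finitely generated `ℤ`-graded `k[X₁,…,X_r]`-modules with support
contained in `{0,…,n-1}`: there is a fully faithful, essentially surjective functor. -/
theorem beilinson_equiv_graded {k : Type} [Field k] [IsAlgClosed k] {n r : ℕ}
    (hn : 2 ≤ n) (hr : 2 ≤ r) :
    ∃ (F : BRep k n r → GrMod k r n)
      (Fh : ∀ X Y : BRep k n r, BRepHom X Y → GrHom (F X) (F Y)),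
      (∀ X, Fh X X (BRepHom.id X) = GrHom.id (F X)) ∧
      (∀ (X Y Z : BRep k n r) (g : BRepHom Y Z) (h : BRepHom X Y),
        Fh X Z (g.comp h) = (Fh Y Z g).comp (Fh X Y h)) ∧
      (∀ X Y : BRep k n r, Bijective (Fh X Y)) ∧
      (∀ G : GrMod k r n, ∃ X : BRep k n r, GrIso (F X) G) := by
  refine ⟨BRep.toGr, fun X Y g => g.toGr, ?_, ?_, ?_, ?_⟩
  · intro X
    apply GrHom.ext'
    intro d
    match d with
    | .ofNat m => rfl
    | .negSucc m =>
      apply LinearMap.ext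
      intro x
      exact Subsingleton.elim _ _
  · intro X Y Z g h
    apply GrHom.ext'
    intro d
    match d with
    | .ofNat m => rfl
    | .negSucc m =>
      apply LinearMap.ext
      intro x
      exact Subsingleton.elim _ _
  · intro X Y
    constructor
    · intro g g' h
      apply BRepHom.ext'
      intro i
      exact congrFun (congrArg GrHom.app h) (Int.ofNat i)
    · intro h
      refine ⟨⟨fun i => h.app (Int.ofNat i), fun j i => h.natural j (Int.ofNat i)⟩, ?_⟩
      apply GrHom.ext'
      intro d
      match d with
      | .ofNat m => rfl
      | .negSucc m =>
        apply LinearMap.ext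
        intro x
        exact Subsingleton.elim _ _
  · intro G
    refine ⟨⟨fun i => G.C (Int.ofNat i), fun j i => G.act j (Int.ofNat i),
      fun s t i => G.comm s t (Int.ofNat i),
      fun i hi => G.supp (Int.ofNat i) (Or.inr (Int.ofNat_le.mpr hi))⟩, ?_⟩
    refine ⟨⟨fun d => ?_, ?_⟩, ?_⟩
    · match d with
      | .ofNat m => exact LinearMap.id
      | .negSucc m => exact 0
    · intro j d
      match d with
      | .ofNat m => rfl
      | .negSucc m =>
        apply LinearMap.ext
        intro x
        have hx : x = 0 := Subsingleton.elim x 0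
        simp [hx]
    · intro d
      match d with
      | .ofNat m => exact Function.bijective_id
      | .negSucc m =>
        haveI : Subsingleton (G.C (Int.negSucc m)) :=
          G.supp _ (Or.inl (by exact_mod_cast Int.negSucc_lt_zero m))
        constructor
        · intro a b _
          exact Subsingleton.elim a b
        · intro y
          exact ⟨0, Subsingleton.elim _ _⟩
end

section
/- Every B(n,r)-module with the equal images property has constant Jordan type, i.e., for each j the rank of (α_M)^j is independent of α ∈ k^r \ {0}; in fact rk(α_M)^j = Σ_{i=j}^{n−1} dim_k e_i·M. -/
open Function Module

variable {k : Type} [Field k] {n r : ℕ}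

/-- The degree-`i` component of the `j`-th power of the operator `α_M`. -/
noncomputable def BRep.pow {k : Type} [Field k] {n r : ℕ} (X : BRep k n r)
    (α : Fin r → k) : (j i : ℕ) → (X.V i →ₗ[k] X.V (i + j))
  | 0, _ => LinearMap.id
  | j + 1, i => (X.lop α (i + j)).comp (X.pow α j i)

lemma BRep.pow_surj {k : Type} [Field k] {n r : ℕ} (X : BRep k n r) (hX : X.EIP)
    (α : Fin r → k) (hα : α ≠ 0) : ∀ j i, Surjective (X.pow α j i) := by
  intro j
  induction j with
  | zero => intro i; exact surjective_id
  | succ j ih =>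
      intro i
      exact (hX α hα (i + j)).comp (ih i)

/-- A module with the equal images property has constant Jordan type:
for every `j ≥ 1` and every `α ≠ 0`, the rank of `(α_M)^j` equals
`Σ_{i=j}^{n-1} dim_k e_i·M`; in particular it is independent of `α`. -/
theorem eip_constant_jordan_type {k : Type} [Field k] [IsAlgClosed k] {n r : ℕ}
    (hn : 2 ≤ n) (hr : 2 ≤ r) (X : BRep k n r) (hX : X.EIP) :
    ∀ α : Fin r → k, α ≠ 0 → ∀ j : ℕ, 1 ≤ j →
      ∑ i ∈ Finset.range n, finrank k (LinearMap.range (X.pow α j i)) =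
        ∑ i ∈ Finset.Ico j n, finrank k (X.V i) := by
  intro α hα j _
  have hsurj := X.pow_surj hX α hα j
  have h1 : ∀ i, finrank k (LinearMap.range (X.pow α j i)) = finrank k (X.V (i + j)) := by
    intro i
    rw [LinearMap.range_eq_top.mpr (hsurj i), finrank_top]
  calc ∑ i ∈ Finset.range n, finrank k (LinearMap.range (X.pow α j i))
      = ∑ i ∈ Finset.range n, finrank k (X.V (j + i)) := by
        refine Finset.sum_congr rfl fun i _ => ?_
        rw [h1 i, Nat.add_comm]
    _ = ∑ i ∈ Finset.Ico j (j + n), finrank k (X.V i) := by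
        rw [Finset.sum_Ico_eq_sum_range]
        simp
    _ = ∑ i ∈ Finset.Ico j n, finrank k (X.V i) := by
        refine (Finset.sum_subset (Finset.Ico_subset_Ico_right (Nat.le_add_left n j)) ?_).symm
        intro i hi hni
        simp only [Finset.mem_Ico] at hi hni
        have : n ≤ i := by omega
        haveI := X.bound i this
        exact finrank_zero_of_subsingleton
end

section
/- If 0 → τN → E → N → 0 is an almost split (Auslander–Reiten) sequence in mod A with Hom_A(M, τN) = 0, then its image under the embedding ι_A, namely 0 → (τN, 0)₀ → (E, 0)₀ → (N, 0)₀ → 0, is an almost split sequence in mod A[M]. -/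
open Function

variable (k A M : Type) [Field k] [Ring A] [Algebra k A]
  [AddCommGroup M] [Module A M] [Module k M] [IsScalarTower k A M]

/-- A module over the one-point extension `A[M]`: a triple `(N, V)_φ` with `N` an
`A`-module, `V` a `k`-vector space and `φ : V → Hom_A(M, N)` a `k`-linear map. -/
structure OPMod where
  N : Type
  [acgN : AddCommGroup N]
  [modAN : Module A N]
  [modkN : Module k N]
  [towN : IsScalarTower k A N]
  V : Type
  [acgV : AddCommGroup V]
  [modV : Module k V]
  φ : V →ₗ[k] (M →ₗ[A] N)

attribute [instance] OPMod.acgN OPMod.modAN OPMod.modkN OPMod.towN OPMod.acgV OPMod.modV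

/-- Morphisms of `A[M]`-modules: pairs `(f₀, f₁)` with `Hom_A(M, f₀) ∘ φ = ψ ∘ f₁`. -/
structure OPHom (X Y : OPMod k A M) where
  f0 : X.N →ₗ[A] Y.N
  f1 : X.V →ₗ[k] Y.V
  compat : ∀ v m, f0 (X.φ v m) = Y.φ (f1 v) m

/-- The full exact embedding `ι_A : mod A → mod A[M]`, `N ↦ (N, 0)₀`. -/
def iota (N : Type) [AddCommGroup N] [Module A N] : OPMod k A M :=
  letI : Module k N := Module.compHom N (algebraMap k A)
  letI : IsScalarTower k A N := ⟨fun c a x => by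
    show (c • a) • x = algebraMap k A c • (a • x)
    rw [Algebra.smul_def, mul_smul]⟩
  { N := N, V := PUnit, φ := 0 }

/-- `ι_A` on morphisms. -/
def iotaHom {N N' : Type} [AddCommGroup N] [Module A N] [AddCommGroup N'] [Module A N']
    (f : N →ₗ[A] N') : OPHom k A M (iota k A M N) (iota k A M N') :=
  ⟨f, 0, fun v m => by
    have hφ : (iota k A M N).φ = 0 := rfl
    have hφ' : (iota k A M N').φ = 0 := rfl
    simp [hφ, hφ']
    exact f.map_zero⟩

/-- Direct sum of `A[M]`-modules. -/
noncomputable def OPMod.prod (X Y : OPMod k A M) : OPMod k A M where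
  N := X.N × Y.N
  V := X.V × Y.V
  φ :=
    { toFun := fun p => (X.φ p.1).prod (Y.φ p.2)
      map_add' := by
        intro p q
        apply LinearMap.ext
        intro m
        simp [LinearMap.prod_apply, Prod.ext_iff]
      map_smul' := by
        intro c p
        apply LinearMap.ext
        intro m
        simp [LinearMap.prod_apply, Prod.ext_iff] }

/-- The zero `A[M]`-module. -/
def OPMod.IsZero (X : OPMod k A M) : Prop := Subsingleton X.N ∧ Subsingleton X.V

/-- Isomorphism of `A[M]`-modules. -/
def OPIso (X Y : OPMod k A M) : Prop :=
  ∃ g : OPHom k A M X Y, Bijective g.f0 ∧ Bijective g.f1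

/-- Indecomposability of `A[M]`-modules. -/
def OPIndec (P : OPMod k A M) : Prop :=
  ¬P.IsZero k A M ∧ ∀ X Y : OPMod k A M, OPIso k A M P (X.prod k A M Y) →
    X.IsZero k A M ∨ Y.IsZero k A M

/-- Projectivity of `A[M]`-modules (lifting against epimorphisms). -/
def OPProjective (P : OPMod k A M) : Prop :=
  ∀ (X Y : OPMod k A M) (g : OPHom k A M X Y),
    Surjective g.f0 → Surjective g.f1 →
    ∀ h : OPHom k A M P Y, ∃ l : OPHom k A M P X,
      (∀ x, g.f0 (l.f0 x) = h.f0 x) ∧ ∀ v, g.f1 (l.f1 v) = h.f1 v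

/-- Indecomposability of an `A`-module. -/
def ModIndec (A : Type) [Ring A] (Q : Type) [AddCommGroup Q] [Module A Q] : Prop :=
  ¬Subsingleton Q ∧ ∀ N₁ N₂ : Submodule A Q, IsCompl N₁ N₂ → N₁ = ⊤ ∨ N₂ = ⊤

/-- An almost split (Auslander–Reiten) sequence `0 → X → E → Y → 0` of `A`-modules. -/
def IsAlmostSplitSeq {X E Y : Type}
    [AddCommGroup X] [Module A X] [AddCommGroup E] [Module A E]
    [AddCommGroup Y] [Module A Y]
    (f : X →ₗ[A] E) (g : E →ₗ[A] Y) : Prop :=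
  Injective f ∧ Surjective g ∧ Function.Exact f g ∧
  (¬∃ s : Y →ₗ[A] E, g.comp s = LinearMap.id) ∧
  ModIndec A X ∧ ModIndec A Y ∧
  (∀ (Z : Type) [AddCommGroup Z] [Module A Z], ∀ h : Z →ₗ[A] Y,
      (¬∃ s : Y →ₗ[A] Z, h.comp s = LinearMap.id) →
      ∃ t : Z →ₗ[A] E, g.comp t = h) ∧
  (∀ (Z : Type) [AddCommGroup Z] [Module A Z], ∀ h : X →ₗ[A] Z,
      (¬∃ p : Z →ₗ[A] X, p.comp h = LinearMap.id) →
      ∃ t : E →ₗ[A] Z, t.comp f = h)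

/-- An almost split sequence of `A[M]`-modules. -/
def OPAlmostSplit {X E Y : OPMod k A M} (f : OPHom k A M X E) (g : OPHom k A M E Y) :
    Prop :=
  Injective f.f0 ∧ Injective f.f1 ∧ Surjective g.f0 ∧ Surjective g.f1 ∧
  Function.Exact f.f0 g.f0 ∧ Function.Exact f.f1 g.f1 ∧
  (¬∃ s : OPHom k A M Y E, (∀ y, g.f0 (s.f0 y) = y) ∧ ∀ v, g.f1 (s.f1 v) = v) ∧
  OPIndec k A M X ∧ OPIndec k A M Y ∧
  (∀ (Z : OPMod k A M) (h : OPHom k A M Z Y),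
      (¬∃ s : OPHom k A M Y Z, (∀ y, h.f0 (s.f0 y) = y) ∧ ∀ v, h.f1 (s.f1 v) = v) →
      ∃ t : OPHom k A M Z E,
        (∀ z, g.f0 (t.f0 z) = h.f0 z) ∧ ∀ v, g.f1 (t.f1 v) = h.f1 v) ∧
  (∀ (Z : OPMod k A M) (h : OPHom k A M X Z),
      (¬∃ p : OPHom k A M Z X, (∀ x, p.f0 (h.f0 x) = x) ∧ ∀ v, p.f1 (h.f1 v) = v) →
      ∃ t : OPHom k A M E Z,
        (∀ x, t.f0 (f.f0 x) = h.f0 x) ∧ ∀ v, t.f1 (f.f1 v) = h.f1 v)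

lemma opindec_iota (Q : Type) [AddCommGroup Q] [Module A Q] (hQ : ModIndec A Q) :
    OPIndec k A M (iota k A M Q) := by
  constructor
  · rintro ⟨hN, -⟩
    exact hQ.1 hN
  · rintro X' Y' ⟨G, hG0, hG1⟩
    haveI hPU : Subsingleton (iota k A M Q).V := (inferInstance : Subsingleton PUnit)
    haveI hVV : Subsingleton (X'.V × Y'.V) := hG1.2.subsingleton
    have hVX : Subsingleton X'.V :=
      (Prod.fst_surjective (α := X'.V) (β := Y'.V)).subsingleton
    have hVY : Subsingleton Y'.V :=
      (Prod.snd_surjective (α := X'.V) (β := Y'.V)).subsingleton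
    obtain ⟨g0, hG0'⟩ : ∃ g0 : Q →ₗ[A] (X'.N × Y'.N), Bijective g0 := ⟨G.f0, hG0⟩
    let N₁ : Submodule A Q := LinearMap.ker ((LinearMap.snd A X'.N Y'.N).comp g0)
    let N₂ : Submodule A Q := LinearMap.ker ((LinearMap.fst A X'.N Y'.N).comp g0)
    have memN₁ : ∀ x : Q, x ∈ N₁ ↔ (g0 x).2 = 0 := fun x => LinearMap.mem_ker
    have memN₂ : ∀ x : Q, x ∈ N₂ ↔ (g0 x).1 = 0 := fun x => LinearMap.mem_ker
    have hcompl : IsCompl N₁ N₂ := by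
      constructor
      · rw [Submodule.disjoint_def]
        intro x hx1 hx2
        apply hG0'.1
        rw [map_zero]
        exact Prod.ext ((memN₂ x).mp hx2) ((memN₁ x).mp hx1)
      · rw [codisjoint_iff, eq_top_iff]
        intro x _
        obtain ⟨x₁, hx₁⟩ := hG0'.2 ((g0 x).1, 0)
        obtain ⟨x₂, hx₂⟩ := hG0'.2 (0, (g0 x).2)
        refine Submodule.mem_sup.mpr ⟨x₁, ?_, x₂, ?_, ?_⟩
        · exact (memN₁ x₁).mpr (congrArg Prod.snd hx₁)
        · exact (memN₂ x₂).mpr (congrArg Prod.fst hx₂)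
        · apply hG0'.1
          rw [map_add, hx₁, hx₂]
          exact Prod.ext (by simp) (by simp)
    rcases hQ.2 N₁ N₂ hcompl with h | h
    · right
      refine ⟨?_, hVY⟩
      refine subsingleton_of_forall_eq 0 fun y => ?_
      obtain ⟨x, hx⟩ := hG0'.2 (0, y)
      have hx1 : (g0 x).2 = 0 := (memN₁ x).mp (h ▸ Submodule.mem_top)
      rw [hx] at hx1
      exact hx1
    · left
      refine ⟨?_, hVX⟩
      refine subsingleton_of_forall_eq 0 fun y => ?_
      obtain ⟨x, hx⟩ := hG0'.2 (y, 0)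
      have hx2 : (g0 x).1 = 0 := (memN₂ x).mp (h ▸ Submodule.mem_top)
      rw [hx] at hx2
      exact hx2

/-- If `0 → τN → E → N → 0` is an almost split sequence of
`A`-modules with `Hom_A(M, τN) = 0`, then its image under `ι_A`, namely
`0 → (τN,0)₀ → (E,0)₀ → (N,0)₀ → 0`, is an almost split sequence of `A[M]`-modules. -/
theorem almost_split_lifts [FiniteDimensional k A] [FiniteDimensional k M]
    (X E Y : Type) [AddCommGroup X] [Module A X] [AddCommGroup E] [Module A E]
    [AddCommGroup Y] [Module A Y]
    (f : X →ₗ[A] E) (g : E →ₗ[A] Y)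
    (hseq : IsAlmostSplitSeq A f g)
    (hhom : ∀ h : M →ₗ[A] X, h = 0) :
    OPAlmostSplit k A M (iotaHom k A M f) (iotaHom k A M g) := by
  obtain ⟨hfi, hgs, hex, hns, hiX, hiY, hras, hlas⟩ := hseq
  haveI hsX : Subsingleton (iota k A M X).V := (inferInstance : Subsingleton PUnit)
  haveI hsE : Subsingleton (iota k A M E).V := (inferInstance : Subsingleton PUnit)
  haveI hsY : Subsingleton (iota k A M Y).V := (inferInstance : Subsingleton PUnit)
  refine ⟨hfi, fun a b _ => Subsingleton.elim a b, hgs,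
    fun y => ⟨y, Subsingleton.elim _ _⟩, hex,
    fun y => ⟨fun _ => ⟨y, Subsingleton.elim _ _⟩, fun _ => Subsingleton.elim _ _⟩,
    ?_, opindec_iota k A M X hiX, opindec_iota k A M Y hiY, ?_, ?_⟩
  · -- not split
    rintro ⟨s, hs0, -⟩
    exact hns ⟨s.f0, LinearMap.ext hs0⟩
  · -- right almost split
    intro Z h hnsec
    have hnos : ¬∃ s : Y →ₗ[A] Z.N, h.f0.comp s = LinearMap.id := by
      rintro ⟨s, hs⟩
      apply hnsec
      refine ⟨⟨s, 0, fun v m => ?_⟩, fun y => DFunLike.congr_fun hs y,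
        fun v => Subsingleton.elim _ _⟩
      calc s ((iota k A M Y).φ v m) = s 0 := rfl
        _ = 0 := map_zero s
        _ = Z.φ ((0 : (iota k A M Y).V →ₗ[k] Z.V) v) m := by
            simp
    obtain ⟨t0, ht0⟩ := hras Z.N h.f0 hnos
    have key : ∀ (v : Z.V) (m : M), t0 (Z.φ v m) = 0 := by
      intro v m
      have hker : ∀ m', g (t0 (Z.φ v m')) = 0 := fun m' =>
        calc g (t0 (Z.φ v m')) = (show Y from h.f0 (Z.φ v m')) := DFunLike.congr_fun ht0 (Z.φ v m')
          _ = (show Y from (iota k A M Y).φ (h.f1 v) m') := h.compat v m'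
          _ = 0 := rfl
      set w : M →ₗ[A] LinearMap.range f :=
        LinearMap.codRestrict (LinearMap.range f) (t0.comp (Z.φ v))
          (fun m' => LinearMap.mem_range.mpr ((hex _).mp (hker m'))) with hw
      have hfin : f ((LinearEquiv.ofInjective f hfi).symm (w m)) = t0 (Z.φ v m) := by
        have h1 := LinearEquiv.ofInjective_apply (h := hfi) f
          ((LinearEquiv.ofInjective f hfi).symm (w m))
        rw [← h1, LinearEquiv.apply_symm_apply]
        rfl
      have hzero : (LinearEquiv.ofInjective f hfi).symm (w m) = 0 :=
        DFunLike.congr_fun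
          (hhom ((LinearEquiv.ofInjective f hfi).symm.toLinearMap.comp w)) m
      rw [hzero, map_zero] at hfin
      exact hfin.symm
    refine ⟨⟨t0, 0, fun v m => ?_⟩, fun z => DFunLike.congr_fun ht0 z,
      fun v => Subsingleton.elim _ _⟩
    exact key v m
  · -- left almost split
    intro Z h hnret
    have hnor : ¬∃ p : Z.N →ₗ[A] X, p.comp h.f0 = LinearMap.id := by
      rintro ⟨p, hp⟩
      apply hnret
      refine ⟨⟨p, 0, fun v m => ?_⟩, fun x => DFunLike.congr_fun hp x,
        fun v => Subsingleton.elim _ _⟩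
      exact DFunLike.congr_fun (hhom (p.comp (Z.φ v))) m
    obtain ⟨t0, ht0⟩ := hlas Z.N h.f0 hnor
    refine ⟨⟨t0, h.f1, fun v m => ?_⟩, fun x => DFunLike.congr_fun ht0 x,
      fun v => congrArg h.f1 (Subsingleton.elim _ _)⟩
    have hc : (0 : Z.N) = Z.φ (h.f1 v) m :=
      calc (0 : Z.N) = h.f0 ((iota k A M X).φ v m) := (map_zero h.f0).symm
        _ = Z.φ (h.f1 v) m := h.compat v m
    calc t0 ((iota k A M E).φ v m) = t0 0 := rfl
      _ = 0 := map_zero t0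
      _ = Z.φ (h.f1 v) m := hc
end

section
/- The class EIP(n,r) of B(n,r)-modules with the equal images property is closed under extensions, quotients, and finite direct sums (i.e., it is a torsion class in mod B(n,r)). -/
open Function Module

variable {k : Type} [Field k] {n r : ℕ}

lemma BRepHom.lop_natural {k : Type} [Field k] {n r : ℕ} {X Y : BRep k n r}
    (g : BRepHom X Y) (α : Fin r → k) (i : ℕ) (x : X.V i) :
    g.app (i + 1) (X.lop α i x) = Y.lop α i (g.app i x) := by
  simp only [BRep.lop, LinearMap.sum_apply, LinearMap.smul_apply, map_sum, map_smul]
  refine Finset.sum_congr rfl fun j _ => ?_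
  have := LinearMap.congr_fun (g.natural j i) x
  simp only [LinearMap.comp_apply] at this
  rw [← this]

/-- `EIP(n,r)` is a torsion class: it is closed under quotients
(images under surjections), extensions, and finite direct sums. -/
theorem eip_torsion_class {k : Type} [Field k] [IsAlgClosed k] {n r : ℕ}
    (hn : 2 ≤ n) (hr : 2 ≤ r) :
    (∀ (X Y : BRep k n r) (g : BRepHom X Y),
        (∀ i, Surjective (g.app i)) → X.EIP → Y.EIP) ∧
    (∀ (X E Y : BRep k n r) (f : BRepHom X E) (g : BRepHom E Y),
        (∀ i, Injective (f.app i)) → (∀ i, Surjective (g.app i)) →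
        (∀ i, Function.Exact (f.app i) (g.app i)) →
        X.EIP → Y.EIP → E.EIP) ∧
    (∀ X Y : BRep k n r, X.EIP → Y.EIP → (X.prod Y).EIP) := by
  refine ⟨?_, ?_, ?_⟩
  · intro X Y g hg hX α hα i y
    obtain ⟨y', hy'⟩ := hg (i + 1) y
    obtain ⟨x, hx⟩ := hX α hα i y'
    exact ⟨g.app i x, by rw [← g.lop_natural, hx, hy']⟩
  · intro X E Y f g hf hg hexact hX hY α hα i e
    obtain ⟨y', hy'⟩ := hY α hα i (g.app (i + 1) e)
    obtain ⟨e', he'⟩ := hg i y'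
    have hker : g.app (i + 1) (e - E.lop α i e') = 0 := by
      rw [map_sub, g.lop_natural, he', hy', sub_self]
    obtain ⟨x, hx⟩ := (hexact (i + 1) _).mp hker
    obtain ⟨x', hx'⟩ := hX α hα i x
    refine ⟨e' + f.app i x', ?_⟩
    rw [map_add, ← f.lop_natural, hx', hx]
    abel
  · intro X Y hX hY α hα i ⟨a, b⟩
    obtain ⟨x, hx⟩ := hX α hα i a
    obtain ⟨y, hy⟩ := hY α hα i b
    refine ⟨(x, y), ?_⟩
    have : (X.prod Y).lop α i (x, y) = (X.lop α i x, Y.lop α i y) := by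
      simp only [BRep.lop]
      erw [LinearMap.sum_apply]
      refine Prod.ext ?_ ?_
      · erw [Prod.fst_sum]
        refine Eq.trans ?_ (LinearMap.sum_apply Finset.univ (fun j => α j • X.f j i) x).symm
        exact Finset.sum_congr rfl fun j _ => rfl
      · erw [Prod.snd_sum]
        refine Eq.trans ?_ (LinearMap.sum_apply Finset.univ (fun j => α j • Y.f j i) y).symm
        exact Finset.sum_congr rfl fun j _ => rfl
    rw [this, hx, hy]
end

section
/- There are no nonzero B(n,r)-module homomorphisms from a module with the equal images property to a module with the equal kernels property: Hom(M, N) = 0 for M ∈ EIP(n,r), N ∈ EKP(n,r). -/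
open Function Module

variable {k : Type} [Field k] {n r : ℕ}

/-- There are no nonzero homomorphisms from a module with the
equal images property to a module with the equal kernels property. -/
theorem hom_eip_ekp_eq_zero {k : Type} [Field k] [IsAlgClosed k] {n r : ℕ}
    (hn : 2 ≤ n) (hr : 2 ≤ r) (X Y : BRep k n r) (hX : X.EIP) (hY : Y.EKP)
    (g : BRepHom X Y) : ∀ i x, g.app i x = 0 := by
    -- naturality of `lop`
  have hnat : ∀ (α : Fin r → k) (i : ℕ) (x : X.V i),
      Y.lop α i (g.app i x) = g.app (i+1) (X.lop α i x) := by
    intro α i x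
    simp only [BRep.lop, LinearMap.sum_apply, LinearMap.smul_apply, map_sum, map_smul]
    refine Finset.sum_congr rfl fun j _ => ?_
    congr 1
    exact LinearMap.congr_fun (g.natural j i) x
  have lop_apply : ∀ (Z : BRep k n r) (α : Fin r → k) (i : ℕ) (x : Z.V i),
      Z.lop α i x = ∑ j, α j • Z.f j i x := by
    intro Z α i x
    simp [BRep.lop]
  -- two distinct indices
  have h0r : 0 < r := by omega
  have h1r : 1 < r := by omega
  set i0 : Fin r := ⟨0, h0r⟩ with hi0
  set i1 : Fin r := ⟨1, h1r⟩ with hi1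
  have hne : i0 ≠ i1 := by
    intro h
    simpa [hi0, hi1] using congrArg Fin.val h
  classical
  set e0 : Fin r → k := Pi.single i0 (1 : k) with he0def
  set e1 : Fin r → k := Pi.single i1 (1 : k) with he1def
  have he0 : e0 ≠ 0 := by
    intro h
    have := congrFun h i0
    simp [he0def] at this
  have he1 : e1 ≠ 0 := by
    intro h
    have := congrFun h i1
    simp [he1def] at this
  -- key step: `g.app 0 = 0`
  have hzero0 : ∀ x : X.V 0, g.app 0 x = 0 := by
    set W0 := LinearMap.range (g.app 0) with hW0
    set W1 := LinearMap.range (g.app 1) with hW1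
    have hmem : ∀ (α : Fin r → k) (x : Y.V 0), x ∈ W0 → Y.lop α 0 x ∈ W1 := by
      rintro α x ⟨z, rfl⟩
      exact ⟨X.lop α 0 z, (hnat α 0 z).symm⟩
    set A : W0 →ₗ[k] W1 := (Y.lop e0 0).restrict (hmem e0) with hA
    set B : W0 →ₗ[k] W1 := (Y.lop e1 0).restrict (hmem e1) with hB
    have hn1 : 0 + 1 < n := by omega
    have hAval : ∀ v : W0, (A v : Y.V 1) = Y.lop e0 0 (v : Y.V 0) := fun v => rfl
    have hBval : ∀ v : W0, (B v : Y.V 1) = Y.lop e1 0 (v : Y.V 0) := fun v => rfl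
    have hAinj : Function.Injective A := by
      intro v w h
      have := congrArg (Subtype.val) h
      rw [hAval, hAval] at this
      exact Subtype.ext (hY e0 he0 0 hn1 this)
    have hAsurj : Function.Surjective A := by
      rintro ⟨y, z, rfl⟩
      obtain ⟨w, hw⟩ := hX e0 he0 0 z
      refine ⟨⟨g.app 0 w, ⟨w, rfl⟩⟩, Subtype.ext ?_⟩
      rw [hAval]
      simp only
      rw [hnat e0 0 w, hw]
    set E : W0 ≃ₗ[k] W1 := LinearEquiv.ofBijective A ⟨hAinj, hAsurj⟩ with hE
    set u : Module.End k W0 := E.symm.toLinearMap.comp B with hu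
    rcases subsingleton_or_nontrivial W0 with hss | hnt
    · intro x
      have : (⟨g.app 0 x, ⟨x, rfl⟩⟩ : W0) = (⟨0, Submodule.zero_mem _⟩ : W0) :=
        Subsingleton.elim _ _
      exact congrArg Subtype.val this
    · exfalso
      obtain ⟨μ, hμ⟩ := Module.End.exists_eigenvalue u
      obtain ⟨v, hv⟩ := hμ.exists_hasEigenvector
      have hvne : v ≠ 0 := hv.right
      have huv : u v = μ • v := hv.apply_eq_smul
      have hBv : B v = μ • A v := by
        have : E (E.symm (B v)) = E (μ • v) := by
          rw [show E.symm (B v) = u v from rfl, huv]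
        rw [E.apply_symm_apply] at this
        rw [this, map_smul]
        rfl
      have hμne : μ ≠ 0 := by
        intro h
        rw [h, zero_smul] at hBv
        have : Y.lop e1 0 (v : Y.V 0) = 0 := by
          rw [← hBval, hBv]; rfl
        have h0 : Y.lop e1 0 (v : Y.V 0) = Y.lop e1 0 0 := by rw [this, map_zero]
        exact hvne (Subtype.ext (hY e1 he1 0 hn1 h0))
      set α : Fin r → k := fun j => μ * e0 j - e1 j with hα
      have hαne : α ≠ 0 := by
        intro h
        have := congrFun h i1
        simp [hα, he0def, he1def, Pi.single_apply, hne.symm] at this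
      have hlop : Y.lop α 0 (v : Y.V 0) = 0 := by
        rw [lop_apply]
        have : ∀ j, α j • Y.f j 0 (v : Y.V 0)
            = μ • (e0 j • Y.f j 0 (v : Y.V 0)) - e1 j • Y.f j 0 (v : Y.V 0) := by
          intro j
          rw [hα]
          simp only [sub_smul, mul_smul]
        rw [Finset.sum_congr rfl fun j _ => this j, Finset.sum_sub_distrib,
          ← Finset.smul_sum, ← lop_apply, ← lop_apply, ← hAval, ← hBval, hBv]
        simp
      have h0 : Y.lop α 0 (v : Y.V 0) = Y.lop α 0 0 := by rw [hlop, map_zero]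
      exact hvne (Subtype.ext (hY α hαne 0 hn1 h0))
  -- propagate by surjectivity
  intro i
  induction i with
  | zero => exact hzero0
  | succ i ih =>
    intro x
    obtain ⟨z, hz⟩ := hX e0 he0 i x
    rw [← hz, ← hnat e0 i z, ih z, map_zero]
end

section
/- The linear dual functor D = Hom_k(−, k), combined with reversing the labelling of the vertices, defines a duality on mod B(n,r) that interchanges the equal images property and the equal kernels property: D(EIP(n,r)) = EKP(n,r). -/
open Function Module

variable {k : Type} [Field k] {n r : ℕ}

namespace BDual

open Function Module

variable {k : Type} [Field k] {n r : ℕ}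

/-- Vertex relabelling, an involution of `ℕ`. -/
def rev (n i : ℕ) : ℕ := if i < n then n - 1 - i else i

lemma rev_rev (n i : ℕ) : rev n (rev n i) = i := by
  simp only [rev]; split_ifs <;> omega

lemma rev_succ (n i : ℕ) : rev n (i + 1) + 1 = rev n i ↔ i + 1 < n := by
  simp only [rev]; split_ifs <;> omega

lemma rev_lt {n i : ℕ} (h : i < n) : rev n i = n - 1 - i := if_pos h

lemma rev_ge {n i : ℕ} (h : n ≤ i) : rev n i = i := if_neg (by omega)

/-- Cast between components of a representation. -/
def ceq (X : BRep k n r) : ∀ {a b : ℕ}, a = b → (X.V a ≃ₗ[k] X.V b)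
  | _, _, rfl => LinearEquiv.refl k _

@[simp] lemma ceq_self (X : BRep k n r) {a : ℕ} (h : a = a) (x : X.V a) :
    ceq X h x = x := rfl

lemma ceq_ceq (X : BRep k n r) {a b c : ℕ} (h1 : a = b) (h2 : b = c) (x : X.V a) :
    ceq X h2 (ceq X h1 x) = ceq X (h1.trans h2) x := by subst h1; subst h2; rfl

lemma f_ceq (X : BRep k n r) (j : Fin r) {a b : ℕ} (h : a = b) (x : X.V a) :
    X.f j b (ceq X h x) = ceq X (congrArg (· + 1) h) (X.f j a x) := by subst h; rfl

lemma app_ceq {X Y : BRep k n r} (g : BRepHom X Y) {a b : ℕ} (h : a = b) (x : X.V a) :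
    g.app b (ceq X h x) = ceq Y h (g.app a x) := by subst h; rfl

lemma dual_ext {M : Type} [AddCommGroup M] [Module k M] {x y : M}
    (h : ∀ φ : Dual k M, φ x = φ y) : x = y := by
  rw [← sub_eq_zero, ← Module.forall_dual_apply_eq_zero_iff k]
  intro φ; rw [map_sub, h φ, sub_self]

/-- The structure maps of the dual representation (before dualising). -/
noncomputable def dmap (X : BRep k n r) (j : Fin r) (i : ℕ) :
    X.V (rev n (i + 1)) →ₗ[k] X.V (rev n i) :=
  if h : rev n (i + 1) + 1 = rev n i
  then (ceq X h).toLinearMap ∘ₗ X.f j (rev n (i + 1)) else 0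

lemma dmap_pos (X : BRep k n r) (j : Fin r) (i : ℕ) (h : i + 1 < n) :
    dmap X j i = (ceq X ((rev_succ n i).mpr h)).toLinearMap ∘ₗ X.f j (rev n (i + 1)) :=
  dif_pos _

lemma dmap_neg (X : BRep k n r) (j : Fin r) (i : ℕ) (h : ¬ i + 1 < n) :
    dmap X j i = 0 :=
  dif_neg fun hc => h ((rev_succ n i).mp hc)

lemma dmap_comm (X : BRep k n r) (s t : Fin r) (i : ℕ) :
    (dmap X t i).comp (dmap X s (i + 1)) = (dmap X s i).comp (dmap X t (i + 1)) := by
  by_cases h : i + 2 < n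
  · have h1 : i + 1 < n := by omega
    rw [dmap_pos X t i h1, dmap_pos X s i h1, dmap_pos X s (i + 1) h, dmap_pos X t (i + 1) h]
    apply LinearMap.ext; intro x
    simp only [LinearMap.comp_apply, LinearMap.coe_comp, LinearEquiv.coe_coe,
      Function.comp_apply]
    rw [f_ceq, f_ceq, ceq_ceq, ceq_ceq]
    have hc := LinearMap.congr_fun (X.comm t s (rev n (i + 1 + 1))) x
    simp only [LinearMap.comp_apply] at hc
    rw [hc]
  · rw [dmap_neg X s (i + 1) h, dmap_neg X t (i + 1) h,
      LinearMap.comp_zero, LinearMap.comp_zero]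

lemma dmap_natural {X Y : BRep k n r} (g : BRepHom X Y) (j : Fin r) (i : ℕ) :
    (g.app (rev n i)).comp (dmap X j i) = (dmap Y j i).comp (g.app (rev n (i + 1))) := by
  by_cases h : i + 1 < n
  · rw [dmap_pos X j i h, dmap_pos Y j i h]
    apply LinearMap.ext; intro x
    simp only [LinearMap.comp_apply, LinearMap.coe_comp, LinearEquiv.coe_coe,
      Function.comp_apply]
    rw [app_ceq]
    have hg := LinearMap.congr_fun (g.natural j (rev n (i + 1))) x
    simp only [LinearMap.comp_apply] at hg
    rw [← hg]
  · rw [dmap_neg X j i h, dmap_neg Y j i h, LinearMap.comp_zero, LinearMap.zero_comp]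

/-- The dual representation. -/
noncomputable def Dob (X : BRep k n r) : BRep k n r where
  V i := Dual k (X.V (rev n i))
  f j i := (dmap X j i).dualMap
  comm s t i := by
    rw [LinearMap.dualMap_comp_dualMap, LinearMap.dualMap_comp_dualMap, dmap_comm]
  bound i h := by
    have : Subsingleton (X.V (rev n i)) := X.bound _ (by rw [rev_ge h]; exact h)
    exact (Module.subsingleton_dual_iff k).mpr this

/-- The dual of a morphism. -/
noncomputable def Dhom {X Y : BRep k n r} (g : BRepHom X Y) : BRepHom (Dob Y) (Dob X) where
  app i := (g.app (rev n i)).dualMap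
  natural j i := by
    show ((dmap X j i).dualMap).comp (g.app (rev n i)).dualMap
      = ((g.app (rev n (i + 1))).dualMap).comp (dmap Y j i).dualMap
    rw [LinearMap.dualMap_comp_dualMap, LinearMap.dualMap_comp_dualMap, dmap_natural]

end BDual
namespace BDual

open Function Module

variable {k : Type} [Field k] {n r : ℕ}

lemma BRepHom_ext {X Y : BRep k n r} {g h : BRepHom X Y}
    (H : ∀ i, g.app i = h.app i) : g = h := by
  cases g; cases h
  simp only [BRepHom.mk.injEq]
  exact funext H

lemma Dhom_id (X : BRep k n r) : Dhom (BRepHom.id X) = BRepHom.id (Dob X) := by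
  apply BRepHom_ext; intro i
  exact LinearMap.dualMap_id

lemma Dhom_comp {X Y Z : BRep k n r} (g : BRepHom Y Z) (h : BRepHom X Y) :
    Dhom (g.comp h) = (Dhom h).comp (Dhom g) := by
  apply BRepHom_ext; intro i
  exact (LinearMap.dualMap_comp_dualMap _ _).symm

lemma dualMap_inj {M N : Type} [AddCommGroup M] [Module k M] [AddCommGroup N]
    [Module k N] {f g : M →ₗ[k] N} (h : f.dualMap = g.dualMap) : f = g := by
  apply LinearMap.ext; intro x
  apply dual_ext (k := k); intro φ
  exact LinearMap.congr_fun (LinearMap.congr_fun h φ) x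

lemma Dhom_injective (X Y : BRep k n r) :
    Injective (fun g : BRepHom X Y => Dhom g) := by
  intro g g' h
  apply BRepHom_ext; intro m
  have h2 := congrArg (fun t : BRepHom (Dob Y) (Dob X) => t.app (rev n m)) h
  simp only [Dhom] at h2
  have h3 : g.app (rev n (rev n m)) = g'.app (rev n (rev n m)) := dualMap_inj h2
  apply LinearMap.ext; intro x
  have hx : ceq X (rev_rev n m) (ceq X (rev_rev n m).symm x) = x := by
    rw [ceq_ceq, ceq_self]
  rw [← hx, app_ceq g, app_ceq g', h3]

/-- Inverse construction for `Dhom`. -/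
noncomputable def undual {X Y : BRep k n r} (h : BRepHom (Dob Y) (Dob X)) (m : ℕ) :
    X.V m →ₗ[k] Y.V m :=
  (ceq Y (rev_rev n m)).toLinearMap ∘ₗ
    (evalEquiv k (Y.V (rev n (rev n m)))).symm.toLinearMap ∘ₗ
      (h.app (rev n m)).dualMap ∘ₗ
        (Dual.eval k (X.V (rev n (rev n m)))) ∘ₗ (ceq X (rev_rev n m).symm).toLinearMap

lemma undual_eq {X Y : BRep k n r} (h : BRepHom (Dob Y) (Dob X)) (m a : ℕ)
    (e : rev n m = a) (hra : rev n a = m) :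
    undual h m = (ceq Y hra).toLinearMap ∘ₗ
      (evalEquiv k (Y.V (rev n a))).symm.toLinearMap ∘ₗ
        (h.app a).dualMap ∘ₗ
          (Dual.eval k (X.V (rev n a))) ∘ₗ (ceq X hra.symm).toLinearMap := by
  subst e; rfl

lemma dualMap_undual {X Y : BRep k n r} (h : BRepHom (Dob Y) (Dob X)) (i : ℕ) :
    (undual h (rev n i)).dualMap = h.app i := by
  rw [undual_eq h (rev n i) i (rev_rev n i) rfl]
  apply LinearMap.ext; intro φ
  apply LinearMap.ext; intro x
  simp only [LinearMap.dualMap_apply, LinearMap.comp_apply, LinearMap.coe_comp,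
    LinearEquiv.coe_coe, Function.comp_apply, ceq_self]
  rw [apply_evalEquiv_symm_apply]
  rfl

end BDual
namespace BDual

open Function Module

variable {k : Type} [Field k] {n r : ℕ}

lemma undual_natural {X Y : BRep k n r} (h : BRepHom (Dob Y) (Dob X)) (j : Fin r) (m : ℕ) :
    (Y.f j m) ∘ₗ (undual h m) = (undual h (m + 1)) ∘ₗ (X.f j m) := by
  by_cases hm : m + 1 < n
  · have hi1 : rev n (m + 1) + 1 = rev n m := (rev_succ n m).mpr hm
    have hra : rev n (rev n (m + 1) + 1) = m := by rw [hi1]; exact rev_rev n m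
    have hcond : rev n (m + 1) + 1 < n := by
      have h1 : m < n := by omega
      rw [hi1, rev_lt h1]; omega
    rw [undual_eq h m (rev n (m + 1) + 1) hi1.symm hra,
        undual_eq h (m + 1) (rev n (m + 1)) rfl (rev_rev n (m + 1))]
    apply LinearMap.ext; intro x
    apply dual_ext (k := k); intro φ
    simp only [LinearMap.comp_apply, LinearMap.coe_comp, LinearEquiv.coe_coe,
      Function.comp_apply]
    have hA : (dmap Y j (rev n (m + 1))).dualMap
          (φ ∘ₗ (ceq Y (rev_rev n (m + 1))).toLinearMap)
        = φ ∘ₗ (Y.f j m) ∘ₗ (ceq Y hra).toLinearMap := by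
      apply LinearMap.ext; intro y
      simp only [LinearMap.dualMap_apply, LinearMap.comp_apply, LinearMap.coe_comp,
        LinearEquiv.coe_coe, Function.comp_apply]
      rw [dmap_pos Y j _ hcond]
      simp only [LinearMap.comp_apply, LinearMap.coe_comp, LinearEquiv.coe_coe,
        Function.comp_apply]
      rw [ceq_ceq, f_ceq Y j hra y]
    have hB : dmap X j (rev n (m + 1)) ((ceq X hra.symm) x)
        = ceq X (rev_rev n (m + 1)).symm ((X.f j m) x) := by
      rw [dmap_pos X j _ hcond]
      simp only [LinearMap.comp_apply, LinearMap.coe_comp, LinearEquiv.coe_coe,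
        Function.comp_apply]
      rw [f_ceq X j hra.symm x, ceq_ceq]
    have key : (dmap X j (rev n (m + 1))).dualMap
          ((h.app (rev n (m + 1))) (φ ∘ₗ (ceq Y (rev_rev n (m + 1))).toLinearMap))
        = (h.app (rev n (m + 1) + 1))
          ((dmap Y j (rev n (m + 1))).dualMap
            (φ ∘ₗ (ceq Y (rev_rev n (m + 1))).toLinearMap)) :=
      LinearMap.congr_fun (h.natural j (rev n (m + 1)))
        (φ ∘ₗ (ceq Y (rev_rev n (m + 1))).toLinearMap)
    have e1 : ∀ z, φ ((Y.f j m) ((ceq Y hra) z))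
        = (φ ∘ₗ (Y.f j m) ∘ₗ (ceq Y hra).toLinearMap) z := fun _ => rfl
    have e2 : ∀ z, φ ((ceq Y (rev_rev n (m + 1))) z)
        = (φ ∘ₗ (ceq Y (rev_rev n (m + 1))).toLinearMap) z := fun _ => rfl
    rw [e1, e2, apply_evalEquiv_symm_apply, apply_evalEquiv_symm_apply, ← hA]
    have final := DFunLike.congr_fun key ((ceq X hra.symm) x)
    obtain ⟨χ', hχ'⟩ : ∃ χ' : Dual k (X.V (rev n (rev n (m + 1)))),
        χ' = (h.app (rev n (m + 1))) (φ ∘ₗ (ceq Y (rev_rev n (m + 1))).toLinearMap) :=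
      ⟨_, rfl⟩
    have step := congrArg (fun z => χ' z) hB
    rw [hχ'] at step
    exact final.symm.trans step
  · have : Subsingleton (Y.V (m + 1)) := Y.bound (m + 1) (by omega)
    apply LinearMap.ext; intro x
    exact Subsingleton.elim _ _

/-- The inverse of `Dhom`, as a morphism of representations. -/
noncomputable def undualHom {X Y : BRep k n r} (h : BRepHom (Dob Y) (Dob X)) :
    BRepHom X Y :=
  ⟨fun m => undual h m, fun j m => undual_natural h j m⟩

lemma Dhom_surjective (X Y : BRep k n r) :
    Surjective (fun g : BRepHom X Y => Dhom g) := by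
  intro h
  refine ⟨undualHom h, BRepHom_ext fun i => ?_⟩
  exact dualMap_undual h i

end BDual
namespace BDual

open Function Module

variable {k : Type} [Field k] {n r : ℕ}

lemma ceq_Dob (X : BRep k n r) {a b : ℕ} (q : a = b) (Ψ : Dual k (X.V (rev n a))) :
    ceq (Dob X) q Ψ = Ψ ∘ₗ (ceq X (congrArg (rev n) q).symm).toLinearMap := by
  subst q; rfl

lemma eta_natural (X : BRep k n r) (j : Fin r) (i : ℕ) :
    (X.f j i) ∘ₗ ((ceq X (rev_rev n i)).toLinearMap ∘ₗ
        (evalEquiv k (X.V (rev n (rev n i)))).symm.toLinearMap)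
      = ((ceq X (rev_rev n (i + 1))).toLinearMap ∘ₗ
          (evalEquiv k (X.V (rev n (rev n (i + 1))))).symm.toLinearMap) ∘ₗ
        (dmap (Dob X) j i).dualMap := by
  by_cases hi : i + 1 < n
  · have hq : rev n (i + 1) + 1 = rev n i := (rev_succ n i).mpr hi
    have hra : rev n (rev n (i + 1) + 1) = i := by rw [hq]; exact rev_rev n i
    have hcond : rev n (i + 1) + 1 < n := by
      have h1 : i < n := by omega
      rw [hq, rev_lt h1]; omega
    apply LinearMap.ext; intro Φ0
    have H : ∀ Φ : Dual k (Dual k (X.V (rev n (rev n i)))),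
        (X.f j i) ((ceq X (rev_rev n i)) ((evalEquiv k (X.V (rev n (rev n i)))).symm Φ))
          = (ceq X (rev_rev n (i + 1))) ((evalEquiv k (X.V (rev n (rev n (i + 1))))).symm
              ((dmap (Dob X) j i).dualMap Φ)) := by
      intro Φ
      apply dual_ext (k := k); intro φ
      -- key computation at the level of functionals
      have hA : (dmap X j (rev n (i + 1))).dualMap
            (φ ∘ₗ (ceq X (rev_rev n (i + 1))).toLinearMap)
          = φ ∘ₗ (X.f j i) ∘ₗ (ceq X hra).toLinearMap := by
        apply LinearMap.ext; intro y
        simp only [LinearMap.dualMap_apply, LinearMap.comp_apply, LinearMap.coe_comp,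
          LinearEquiv.coe_coe, Function.comp_apply]
        rw [dmap_pos X j _ hcond]
        simp only [LinearMap.comp_apply, LinearMap.coe_comp, LinearEquiv.coe_coe,
          Function.comp_apply]
        rw [ceq_ceq, f_ceq X j hra y]
      have hclaim : φ ∘ₗ (X.f j i) ∘ₗ (ceq X (rev_rev n i)).toLinearMap
          = dmap (Dob X) j i (φ ∘ₗ (ceq X (rev_rev n (i + 1))).toLinearMap) := by
        rw [dmap_pos (Dob X) j i hi]
        have hmid : ((Dob X).f j (rev n (i + 1)))
              (φ ∘ₗ (ceq X (rev_rev n (i + 1))).toLinearMap)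
            = φ ∘ₗ (X.f j i) ∘ₗ (ceq X hra).toLinearMap := hA
        simp only [LinearMap.comp_apply, LinearMap.coe_comp, LinearEquiv.coe_coe,
          Function.comp_apply]
        show _ = (ceq (Dob X) hq) (((Dob X).f j (rev n (i + 1)))
          (φ ∘ₗ (ceq X (rev_rev n (i + 1))).toLinearMap))
        rw [hmid, ceq_Dob]
        apply LinearMap.ext; intro y
        simp only [LinearMap.comp_apply, LinearMap.coe_comp, LinearEquiv.coe_coe,
          Function.comp_apply]
        rw [ceq_ceq]
      have e1 : ∀ z, φ ((X.f j i) ((ceq X (rev_rev n i)) z))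
          = (φ ∘ₗ (X.f j i) ∘ₗ (ceq X (rev_rev n i)).toLinearMap) z := fun _ => rfl
      have e2 : ∀ z, φ ((ceq X (rev_rev n (i + 1))) z)
          = (φ ∘ₗ (ceq X (rev_rev n (i + 1))).toLinearMap) z := fun _ => rfl
      rw [e1, e2, apply_evalEquiv_symm_apply]
      erw [apply_evalEquiv_symm_apply]
      exact congrArg (fun z => Φ z) hclaim
    exact H Φ0
  · have : Subsingleton (X.V (i + 1)) := X.bound (i + 1) (by omega)
    apply LinearMap.ext; intro x
    exact Subsingleton.elim _ _

/-- The counit: the double dual is isomorphic to the original representation. -/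
noncomputable def etaHom (X : BRep k n r) : BRepHom (Dob (Dob X)) X :=
  ⟨fun i => (ceq X (rev_rev n i)).toLinearMap ∘ₗ
      (evalEquiv k (X.V (rev n (rev n i)))).symm.toLinearMap,
   fun j i => eta_natural X j i⟩

lemma etaHom_bijective (X : BRep k n r) (i : ℕ) :
    Bijective ((etaHom X).app i) := by
  show Bijective ((ceq X (rev_rev n i)).toLinearMap ∘ₗ
    (evalEquiv k (X.V (rev n (rev n i)))).symm.toLinearMap)
  rw [LinearMap.coe_comp]
  exact ((ceq X (rev_rev n i)).bijective).comp
    ((evalEquiv k (X.V (rev n (rev n i)))).symm.bijective)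

lemma DD_iso (X : BRep k n r) : BRepIso (Dob (Dob X)) X :=
  ⟨etaHom X, etaHom_bijective X⟩

end BDual
namespace BDual

open Function Module

variable {k : Type} [Field k] {n r : ℕ}

lemma dualMap_sum {M N : Type} [AddCommGroup M] [Module k M] [AddCommGroup N]
    [Module k N] (c : Fin r → k) (f : Fin r → (M →ₗ[k] N)) :
    (∑ j, c j • f j).dualMap = ∑ j, c j • (f j).dualMap := by
  apply LinearMap.ext; intro φ
  apply LinearMap.ext; intro x
  simp [LinearMap.dualMap_apply, LinearMap.sum_apply, LinearMap.smul_apply,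
    map_sum, map_smul]

lemma Dob_lop (X : BRep k n r) (α : Fin r → k) (i : ℕ) :
    (Dob X).lop α i = (∑ j, α j • dmap X j i).dualMap := by
  rw [dualMap_sum]; rfl

lemma sum_dmap_pos (X : BRep k n r) (α : Fin r → k) (i : ℕ) (hi : i + 1 < n) :
    ∑ j, α j • dmap X j i
      = (ceq X ((rev_succ n i).mpr hi)).toLinearMap ∘ₗ X.lop α (rev n (i + 1)) := by
  have hd : ∀ j, dmap X j i = (ceq X ((rev_succ n i).mpr hi)).toLinearMap ∘ₗ
      X.f j (rev n (i + 1)) := fun j => dmap_pos X j i hi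
  apply LinearMap.ext; intro x
  simp only [LinearMap.sum_apply, LinearMap.smul_apply, LinearMap.comp_apply,
    LinearEquiv.coe_coe, BRep.lop, map_sum, map_smul, hd]

lemma lop_dual_pos (X : BRep k n r) (α : Fin r → k) (i : ℕ) (hi : i + 1 < n) :
    (Dob X).lop α i
      = ((ceq X ((rev_succ n i).mpr hi)).toLinearMap ∘ₗ X.lop α (rev n (i + 1))).dualMap := by
  rw [Dob_lop, sum_dmap_pos X α i hi]

lemma surj_transfer (X : BRep k n r) (α : Fin r → k) {a b : ℕ} (h : a = b)
    (hs : Surjective (X.lop α a)) : Surjective (X.lop α b) := by subst h; exact hs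

lemma inj_transfer (X : BRep k n r) (α : Fin r → k) {a b : ℕ} (h : a = b)
    (hs : Injective (X.lop α a)) : Injective (X.lop α b) := by subst h; exact hs

lemma hcond2 {n : ℕ} (i : ℕ) (hi : i + 1 < n) : rev n (i + 1) + 1 < n := by
  simp only [rev]; split_ifs <;> omega

lemma hidx2 {n : ℕ} (i : ℕ) (hi : i + 1 < n) : rev n (rev n (i + 1) + 1) = i := by
  simp only [rev]; split_ifs <;> omega

lemma eip_to_ekp (X : BRep k n r) (h : X.EIP) : (Dob X).EKP := by
  intro α hα i hi
  rw [lop_dual_pos X α i hi]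
  refine LinearMap.dualMap_injective_iff.mpr ?_
  rw [LinearMap.coe_comp]
  exact ((ceq X ((rev_succ n i).mpr hi)).bijective.surjective).comp (h α hα _)

lemma ekp_to_eip (X : BRep k n r) (h : (Dob X).EKP) : X.EIP := by
  intro α hα i
  by_cases hi : i + 1 < n
  · have hkey := h α hα (rev n (i + 1)) (hcond2 i hi)
    rw [lop_dual_pos X α (rev n (i + 1)) (hcond2 i hi)] at hkey
    have hkey2 := LinearMap.dualMap_injective_iff.mp hkey
    rw [LinearMap.coe_comp] at hkey2
    have hs : Surjective (X.lop α (rev n (rev n (i + 1) + 1))) := by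
      intro y
      obtain ⟨x, hx⟩ := hkey2 ((ceq X ((rev_succ n (rev n (i + 1))).mpr (hcond2 i hi))) y)
      exact ⟨x, (ceq X _).injective hx⟩
    exact surj_transfer X α (hidx2 i hi) hs
  · have : Subsingleton (X.V (i + 1)) := X.bound (i + 1) (by omega)
    intro y; exact ⟨0, Subsingleton.elim _ _⟩

lemma ekp_to_eip' (X : BRep k n r) (h : X.EKP) : (Dob X).EIP := by
  intro α hα i
  by_cases hi : i + 1 < n
  · rw [lop_dual_pos X α i hi]
    refine LinearMap.dualMap_surjective_iff.mpr ?_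
    rw [LinearMap.coe_comp]
    exact ((ceq X ((rev_succ n i).mpr hi)).injective).comp (h α hα (rev n (i + 1)) (hcond2 i hi))
  · have : Subsingleton ((Dob X).V (i + 1)) := (Dob X).bound (i + 1) (by omega)
    intro y; exact ⟨0, Subsingleton.elim _ _⟩

lemma eip_to_ekp' (X : BRep k n r) (h : (Dob X).EIP) : X.EKP := by
  intro α hα i hi
  have hkey := h α hα (rev n (i + 1))
  rw [lop_dual_pos X α (rev n (i + 1)) (hcond2 i hi)] at hkey
  have hkey2 := LinearMap.dualMap_surjective_iff.mp hkey
  rw [LinearMap.coe_comp] at hkey2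
  have hinj : Injective (X.lop α (rev n (rev n (i + 1) + 1))) := by
    intro x y hxy
    exact hkey2 (show (ceq X _) ((X.lop α _) x) = (ceq X _) ((X.lop α _) y) from
      congrArg _ hxy)
  exact inj_transfer X α (hidx2 i hi) hinj

end BDual
/-- The linear dual `D = Hom_k(-,k)`, combined with reversing the
labelling of the vertices, is a duality on `mod B(n,r)` (a contravariant equivalence,
involutive up to isomorphism, whose value at vertex `i` is the linear dual of the
original module at vertex `n-1-i`) which interchanges `EIP(n,r)` and `EKP(n,r)`. -/
theorem duality_eip_ekp {k : Type} [Field k] [IsAlgClosed k] {n r : ℕ}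
    (hn : 2 ≤ n) (hr : 2 ≤ r) :
    ∃ (D : BRep k n r → BRep k n r)
      (Dh : ∀ X Y : BRep k n r, BRepHom X Y → BRepHom (D Y) (D X)),
      (∀ X, Dh X X (BRepHom.id X) = BRepHom.id (D X)) ∧
      (∀ (X Y Z : BRep k n r) (g : BRepHom Y Z) (h : BRepHom X Y),
        Dh X Z (g.comp h) = (Dh X Y h).comp (Dh Y Z g)) ∧
      (∀ X Y : BRep k n r, Bijective (Dh X Y)) ∧
      (∀ X : BRep k n r, BRepIso (D (D X)) X) ∧
      (∀ X : BRep k n r, ∀ i, i < n →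
        Nonempty ((D X).V i ≃ₗ[k] Module.Dual k (X.V (n - 1 - i)))) ∧
      (∀ X : BRep k n r, X.EIP ↔ (D X).EKP) ∧
      (∀ X : BRep k n r, X.EKP ↔ (D X).EIP) := by
  refine ⟨BDual.Dob, fun X Y g => BDual.Dhom g, ?_, ?_, ?_, ?_, ?_, ?_, ?_⟩
  · exact fun X => BDual.Dhom_id X
  · exact fun X Y Z g h => BDual.Dhom_comp g h
  · exact fun X Y => ⟨BDual.Dhom_injective X Y, BDual.Dhom_surjective X Y⟩
  · exact fun X => BDual.DD_iso X
  · intro X i hlt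
    exact ⟨(BDual.ceq X
      (show n - 1 - i = BDual.rev n i from (BDual.rev_lt hlt).symm)).dualMap⟩
  · exact fun X => ⟨BDual.eip_to_ekp X, BDual.ekp_to_eip X⟩
  · exact fun X => ⟨BDual.ekp_to_eip' X, BDual.eip_to_ekp' X⟩
end
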